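/- arXiv:2512.21753 — 2 statements merged into one kernel-verified Lean document; each statement's English description precedes it below -/
import Mathlib

section
/- For all natural numbers i and n, and real t with 0 < t < 1/2 and real x with 0 ≤ x < x₁(t) := (1 + √(1 − 4t²))/(2t), the double series Σ_{n=0}^∞ (Σ_{i=0}^{n} f(i,n)·x^i)·tⁿ converges and its sum equals 1/(t·(x₁(t) − x)). -/
/-- The number of walks of length `n` on the nonnegative integers starting at `0`,
ending at `i`, with steps `+1` or `-1`. -/
noncomputable def walkCount (i n : ℕ) : ℕ :=
  Nat.card {w : Fin (n + 1) → ℕ //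
    w 0 = 0 ∧ w (Fin.last n) = i ∧
    ∀ k : Fin n, ((w k.succ : ℤ) - (w k.castSucc : ℤ)).natAbs = 1}

/-!
Let `Fᵢ(t) = ∑ₙ f(i,n) tⁿ`. Removing the last step of a walk gives `F₀ = 1 + t F₁` and
`Fᵢ₊₁ = t Fᵢ + t Fᵢ₊₂`. For `t < 1/2` these equations have at most one bounded solution, since
the supremum of the difference of two solutions is at most `2t` times itself; as `x₁` is a root
of `t X² - X + t`, that solution is `Fᵢ = 1 / (t x₁^(i+1))`. Summing the nonnegative double
series over `n` first then leaves the geometric series `∑ᵢ xⁱ / (t x₁^(i+1)) = 1 / (t (x₁ - x))`.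
-/

abbrev NonnegWalk (i n : ℕ) : Type :=
  {w : Fin (n + 1) → ℕ //
    w 0 = 0 ∧ w (Fin.last n) = i ∧
    ∀ k : Fin n, ((w k.succ : ℤ) - (w k.castSucc : ℤ)).natAbs = 1}

namespace NonnegWalk

variable {i n : ℕ}

theorem apply_le (w : NonnegWalk i n) (k : Fin (n + 1)) : w.1 k ≤ k := by
  induction k using Fin.induction with
  | zero => simp [w.2.1]
  | succ k ih =>
    have := w.2.2.2 k
    simp only [Fin.val_castSucc, Fin.val_succ] at ih ⊢
    omega

theorem le_length (w : NonnegWalk i n) : i ≤ n := by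
  simpa [w.2.2.1] using w.apply_le (Fin.last n)

instance : Finite (NonnegWalk i n) :=
  Finite.of_injective (fun w k => (⟨w.1 k, (w.apply_le k).trans_lt k.2⟩ : Fin (n + 1)))
    fun _ _ h => Subtype.ext <| funext fun k => congrArg Fin.val (congrFun h k)

theorem natAbs_sub_penultimate (w : NonnegWalk i (n + 1)) :
    ((i : ℤ) - w.1 (Fin.last n).castSucc).natAbs = 1 := by
  simpa [w.2.2.1] using w.2.2.2 (Fin.last n)

def lastStepEquiv {j : ℕ} (hij : ((i : ℤ) - j).natAbs = 1) :
    {w : NonnegWalk i (n + 1) // w.1 (Fin.last n).castSucc = j} ≃ NonnegWalk j n where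
  toFun w := ⟨Fin.init w.1.1, by simpa [Fin.init] using w.1.2.1, w.2,
    fun k => by simpa [Fin.init] using w.1.2.2.2 k.castSucc⟩
  invFun v := ⟨⟨Fin.snoc v.1 i, by simpa using v.2.1, by simp, fun k => by
      induction k using Fin.lastCases with
      | last => simpa [v.2.2.1] using hij
      | cast k =>
        rw [Fin.succ_castSucc, Fin.snoc_castSucc, Fin.snoc_castSucc]
        exact v.2.2.2 k⟩,
    by simpa using v.2.2.1⟩
  left_inv w := by
    ext : 2
    simp [← w.1.2.2.1]
  right_inv v := by
    ext : 1
    simp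

end NonnegWalk

theorem walkCount_zero_zero : walkCount 0 0 = 1 := by
  have : Unique (NonnegWalk 0 0) :=
    { default := ⟨fun _ => 0, rfl, rfl, Fin.elim0⟩
      uniq := fun w => Subtype.ext <| funext fun k => by
        rw [Subsingleton.elim (α := Fin 1) k 0, w.2.1] }
  exact Nat.card_unique

theorem walkCount_eq_zero {i n : ℕ} (h : n < i) : walkCount i n = 0 := by
  have : IsEmpty (NonnegWalk i n) := ⟨fun w => (w.le_length.trans_lt h).false⟩
  exact Nat.card_of_isEmpty

theorem walkCount_zero_succ (n : ℕ) : walkCount 0 (n + 1) = walkCount 1 n := by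
  have hpen (w : NonnegWalk 0 (n + 1)) : w.1 (Fin.last n).castSucc = 1 := by
    have := w.natAbs_sub_penultimate; omega
  exact (Nat.card_congr ((Equiv.subtypeUnivEquiv hpen).symm.trans
    (NonnegWalk.lastStepEquiv (by norm_num))))

theorem walkCount_succ_succ (i n : ℕ) :
    walkCount (i + 1) (n + 1) = walkCount i n + walkCount (i + 2) n := by
  classical
  have hpen (w : NonnegWalk (i + 1) (n + 1)) :
      ¬ w.1 (Fin.last n).castSucc = i ↔ w.1 (Fin.last n).castSucc = i + 2 := by
    have := w.natAbs_sub_penultimate; omega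
  rw [walkCount, ← Nat.card_congr (Equiv.sumCompl fun w : NonnegWalk (i + 1) (n + 1) =>
    w.1 (Fin.last n).castSucc = i), Nat.card_sum,
    Nat.card_congr (Equiv.subtypeEquivRight hpen)]
  exact congrArg₂ (· + ·) (Nat.card_congr (NonnegWalk.lastStepEquiv (by push_cast; omega)))
    (Nat.card_congr (NonnegWalk.lastStepEquiv (by push_cast; omega)))

theorem walkCount_le_two_pow (i n : ℕ) : walkCount i n ≤ 2 ^ n := by
  induction n generalizing i with
  | zero => rcases i with _ | i <;> simp [walkCount_zero_zero, walkCount_eq_zero]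
  | succ n ih =>
    rcases i with _ | i
    · rw [walkCount_zero_succ, pow_succ]; linarith [ih 1]
    · rw [walkCount_succ_succ, pow_succ]; linarith [ih i, ih (i + 2)]

section GeneratingFunction

variable {t : ℝ}

theorem walkCount_mul_pow_le (ht : 0 ≤ t) (i n : ℕ) :
    (walkCount i n : ℝ) * t ^ n ≤ (2 * t) ^ n := by
  rw [mul_pow]
  gcongr
  exact_mod_cast walkCount_le_two_pow i n

theorem summable_walkCount_mul_pow (ht0 : 0 ≤ t) (ht1 : t < 1 / 2) (i : ℕ) :
    Summable fun n => (walkCount i n : ℝ) * t ^ n :=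
  .of_nonneg_of_le (fun n => by positivity) (walkCount_mul_pow_le ht0 i)
    (summable_geometric_of_lt_one (by positivity) (by linarith))

theorem tsum_walkCount_mul_pow_le (ht0 : 0 ≤ t) (ht1 : t < 1 / 2) (i : ℕ) :
    ∑' n, (walkCount i n : ℝ) * t ^ n ≤ (1 - 2 * t)⁻¹ := by
  rw [← tsum_geometric_of_lt_one (by positivity) (by linarith)]
  exact (summable_walkCount_mul_pow ht0 ht1 i).tsum_le_tsum (walkCount_mul_pow_le ht0 i)
    (summable_geometric_of_lt_one (by positivity) (by linarith))

def SolvesWalkRecurrence (t : ℝ) (u : ℕ → ℝ) : Prop :=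
  u 0 = 1 + t * u 1 ∧ ∀ i, u (i + 1) = t * u i + t * u (i + 2)

theorem solvesWalkRecurrence_tsum (ht0 : 0 ≤ t) (ht1 : t < 1 / 2) :
    SolvesWalkRecurrence t fun i => ∑' n, (walkCount i n : ℝ) * t ^ n := by
  have hsum := summable_walkCount_mul_pow ht0 ht1
  refine ⟨?_, fun i => ?_⟩ <;> dsimp only
  · rw [(hsum 0).tsum_eq_zero_add, ← tsum_mul_left]
    simp only [walkCount_zero_zero, walkCount_zero_succ, Nat.cast_one, pow_zero, mul_one]
    exact congrArg _ (tsum_congr fun n => by ring)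
  · rw [(hsum (i + 1)).tsum_eq_zero_add, ← tsum_mul_left, ← tsum_mul_left,
      ← ((hsum i).mul_left t).tsum_add ((hsum (i + 2)).mul_left t)]
    simp only [walkCount_eq_zero (Nat.succ_pos i), walkCount_succ_succ]
    push_cast
    ring_nf

theorem solvesWalkRecurrence_inv_pow {ρ : ℝ} (ht : t ≠ 0) (hρ : ρ ≠ 0)
    (hroot : t * ρ ^ 2 + t = ρ) :
    SolvesWalkRecurrence t fun i => (t * ρ ^ (i + 1))⁻¹ := by
  refine ⟨?_, fun i => ?_⟩
  · field_simp
    linear_combination (-ρ) * hroot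
  · dsimp only
    field_simp
    linear_combination -(ρ ^ (i + 1) * ρ ^ (i + 2)) * hroot

theorem SolvesWalkRecurrence.eq (ht0 : 0 ≤ t) (ht1 : t < 1 / 2) {u v : ℕ → ℝ}
    (hu : SolvesWalkRecurrence t u) (hv : SolvesWalkRecurrence t v)
    (hu_bdd : BddAbove (Set.range fun i => |u i|))
    (hv_bdd : BddAbove (Set.range fun i => |v i|)) :
    u = v := by
  set d := fun i => |u i - v i|
  have hd_bdd : BddAbove (Set.range d) := by
    obtain ⟨C, hC⟩ := hu_bdd
    obtain ⟨D, hD⟩ := hv_bdd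
    refine ⟨C + D, Set.forall_mem_range.2 fun i => ?_⟩
    have := abs_sub (u i) (v i)
    linarith [hC (Set.mem_range_self i), hD (Set.mem_range_self i)]
  set M := ⨆ i, d i
  have hM : 0 ≤ M := (abs_nonneg _).trans (le_ciSup hd_bdd 0)
  have hle i : d i ≤ M := le_ciSup hd_bdd i
  have hcontract i : d i ≤ 2 * t * M := by
    rcases i with _ | i
    · have : d 0 = t * d 1 := by
        simp only [d, hu.1, hv.1, ← mul_sub, add_sub_add_left_eq_sub, abs_mul, abs_of_nonneg ht0]
      nlinarith [hle 1]
    · have : d (i + 1) ≤ t * d i + t * d (i + 2) := by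
        simp only [d, hu.2 i, hv.2 i]
        calc _ = |t * (u i - v i) + t * (u (i + 2) - v (i + 2))| := by ring_nf
          _ ≤ _ := by
            grw [abs_add_le]
            simp [abs_mul, abs_of_nonneg ht0]
      nlinarith [hle i, hle (i + 2)]
  have hM0 : M ≤ 0 := by nlinarith [ciSup_le hcontract]
  funext i
  exact sub_eq_zero.1 (abs_nonpos_iff.1 ((hle i).trans hM0))

theorem hasSum_walkCount_mul_pow {ρ : ℝ} (ht0 : 0 < t) (ht1 : t < 1 / 2) (hρ : 1 ≤ ρ)
    (hroot : t * ρ ^ 2 + t = ρ) (i : ℕ) :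
    HasSum (fun n => (walkCount i n : ℝ) * t ^ n) (t * ρ ^ (i + 1))⁻¹ := by
  have hF_bdd : BddAbove (Set.range fun i => |∑' n, (walkCount i n : ℝ) * t ^ n|) :=
    ⟨(1 - 2 * t)⁻¹, Set.forall_mem_range.2 fun i => by
      rw [abs_of_nonneg (tsum_nonneg fun n => by positivity)]
      exact tsum_walkCount_mul_pow_le ht0.le ht1 i⟩
  have hG_bdd : BddAbove (Set.range fun i => |(t * ρ ^ (i + 1))⁻¹|) :=
    ⟨t⁻¹, Set.forall_mem_range.2 fun i => by
      rw [abs_of_pos (by positivity)]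
      exact inv_anti₀ ht0 (le_mul_of_one_le_right ht0.le (one_le_pow₀ hρ))⟩
  have hunique := (solvesWalkRecurrence_tsum ht0.le ht1).eq ht0.le ht1
    (solvesWalkRecurrence_inv_pow ht0.ne' (by positivity) hroot) hF_bdd hG_bdd
  rw [← congrFun hunique i]
  exact (summable_walkCount_mul_pow ht0.le ht1 i).hasSum

end GeneratingFunction

theorem hasSum_comm_of_nonneg {β γ : Type*} {f : β → γ → ℝ} (hf : ∀ b c, 0 ≤ f b c)
    {g : β → ℝ} {h : γ → ℝ} {s : ℝ} (hg : ∀ b, HasSum (f b) (g b)) (hs : HasSum g s)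
    (hh : ∀ c, HasSum (fun b => f b c) (h c)) : HasSum h s := by
  have hsum : Summable (Function.uncurry f) :=
    (summable_prod_of_nonneg fun p => hf p.1 p.2).2
      ⟨fun b => (hg b).summable, by simpa only [(hg _).tsum_eq] using hs.summable⟩
  have hf_sum : HasSum (Function.uncurry f) s := by
    simpa only [(hsum.hasSum.prod_fiberwise hg).unique hs] using hsum.hasSum
  exact ((Equiv.prodComm γ β).hasSum_iff.2 hf_sum).prod_fiberwise hh

theorem hasSum_pow_mul_inv_pow_succ {x ρ : ℝ} (hx : 0 ≤ x) (hxρ : x < ρ) :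
    HasSum (fun i => x ^ i * (ρ ^ (i + 1))⁻¹) (ρ - x)⁻¹ := by
  have hρ : 0 < ρ := hx.trans_lt hxρ
  have hgeom := (hasSum_geometric_of_lt_one (div_nonneg hx hρ.le)
    ((div_lt_one hρ).2 hxρ)).mul_left ρ⁻¹
  have hval : ρ⁻¹ * (1 - x / ρ)⁻¹ = (ρ - x)⁻¹ := by
    rw [← mul_inv, mul_sub, mul_one, mul_div_cancel₀ x hρ.ne']
  rw [← hval]
  refine hgeom.congr_fun fun i => ?_
  rw [div_pow, pow_succ, mul_inv, div_eq_mul_inv]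
  ring

/-- The root `x₁(t)` of `t X² - X + t`. -/
noncomputable def largerRoot (t : ℝ) : ℝ := (1 + √(1 - 4 * t ^ 2)) / (2 * t)

theorem one_le_largerRoot {t : ℝ} (ht0 : 0 < t) (ht1 : t ≤ 1 / 2) : 1 ≤ largerRoot t := by
  rw [largerRoot, one_le_div (by positivity)]
  linarith [Real.sqrt_nonneg (1 - 4 * t ^ 2)]

theorem largerRoot_isRoot {t : ℝ} (ht0 : 0 < t) (ht1 : t ≤ 1 / 2) :
    t * largerRoot t ^ 2 + t = largerRoot t := by
  have hsq := Real.sq_sqrt (show 0 ≤ 1 - 4 * t ^ 2 by nlinarith)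
  rw [largerRoot]
  field_simp
  ring_nf at hsq ⊢
  linear_combination hsq

theorem full_generating_function_sum (t x : ℝ) (ht0 : 0 < t) (ht1 : t < 1 / 2)
    (hx0 : 0 ≤ x) (hx1 : x < (1 + Real.sqrt (1 - 4 * t ^ 2)) / (2 * t)) :
    HasSum
      (fun n : ℕ => (∑ i ∈ Finset.range (n + 1), (walkCount i n : ℝ) * x ^ i) * t ^ n)
      (1 / (t * ((1 + Real.sqrt (1 - 4 * t ^ 2)) / (2 * t) - x))) := by
  rw [← largerRoot] at hx1 ⊢
  have hrow (i : ℕ) := (hasSum_walkCount_mul_pow ht0 ht1 (one_le_largerRoot ht0 ht1.le)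
    (largerRoot_isRoot ht0 ht1.le) i).mul_left (x ^ i)
  have hgeom : HasSum (fun i => x ^ i * (t * largerRoot t ^ (i + 1))⁻¹)
      (1 / (t * (largerRoot t - x))) := by
    simpa only [mul_inv, one_div, mul_left_comm] using
      (hasSum_pow_mul_inv_pow_succ hx0 hx1).mul_left t⁻¹
  refine hasSum_comm_of_nonneg (fun i n => by positivity) hrow hgeom fun n => ?_
  have hterm : (∑ i ∈ Finset.range (n + 1), (walkCount i n : ℝ) * x ^ i) * t ^ n =
      ∑ i ∈ Finset.range (n + 1), x ^ i * ((walkCount i n : ℝ) * t ^ n) := by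
    rw [Finset.sum_mul]
    exact Finset.sum_congr rfl fun i _ => by ring
  rw [hterm]
  exact hasSum_sum_of_ne_finset_zero fun i hi => by
    simp [walkCount_eq_zero (by simpa using hi : n < i)]
end

section
/- The formal power series E ∈ ℚ⟦t⟧ whose n-th coefficient is f(0,n) satisfies the second-order linear differential equation t·(1 − 4t²)·E″ + (3 − 16t²)·E′ − 8t·E = 0, where E′ and E″ denote the first and second formal derivatives of E with respect to t. -/
open DyckStep PowerSeries

def prefixHeight (l : List DyckStep) (i : ℕ) : ℤ :=
  ((l.take i).count U : ℤ) - (l.take i).count D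

@[simp]
lemma prefixHeight_zero (l : List DyckStep) : prefixHeight l 0 = 0 := by
  simp [prefixHeight]

lemma prefixHeight_succ (l : List DyckStep) {i : ℕ} (h : i < l.length) :
    prefixHeight l (i + 1) = prefixHeight l i + if l[i] = U then 1 else -1 := by
  simp only [prefixHeight, ← List.take_concat_get' l i h, List.count_append,
    List.count_singleton']
  rcases l[i].dichotomy with hs | hs <;> simp [hs] <;> ring

lemma prefixHeight_of_length_le (l : List DyckStep) {i : ℕ} (h : l.length ≤ i) :
    prefixHeight l i = prefixHeight l l.length := by
  simp [prefixHeight, List.take_of_length_le h]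

def DyckWord.ofPrefixHeight (l : List DyckStep) (hnonneg : ∀ i, 0 ≤ prefixHeight l i)
    (hlength : prefixHeight l l.length = 0) : DyckWord where
  toList := l
  count_U_eq_count_D := by
    simp only [prefixHeight, List.take_length] at hlength
    omega
  count_D_le_count_U i := by
    have := hnonneg i
    simp only [prefixHeight] at this
    omega

lemma DyckWord.prefixHeight_nonneg (p : DyckWord) (i : ℕ) : 0 ≤ prefixHeight p.toList i := by
  have := p.count_D_le_count_U i
  simp only [prefixHeight]
  omega

lemma DyckWord.prefixHeight_length (p : DyckWord) :
    prefixHeight p.toList p.toList.length = 0 := by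
  simp [prefixHeight, p.count_U_eq_count_D]

section Excursion

variable {n : ℕ}

def stepsOf (w : Fin (n + 1) → ℕ) : List DyckStep :=
  List.ofFn fun k : Fin n => if w k.castSucc < w k.succ then U else D

@[simp]
lemma length_stepsOf (w : Fin (n + 1) → ℕ) : (stepsOf w).length = n := by
  simp [stepsOf]

lemma getElem_stepsOf (w : Fin (n + 1) → ℕ) (k : Fin n) :
    (stepsOf w)[(k : ℕ)]'(by simp) = if w k.castSucc < w k.succ then U else D := by
  simp [stepsOf]

lemma prefixHeight_stepsOf {w : Fin (n + 1) → ℕ} (h0 : w 0 = 0)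
    (hstep : ∀ k : Fin n, ((w k.succ : ℤ) - (w k.castSucc : ℤ)).natAbs = 1) (k : Fin (n + 1)) :
    prefixHeight (stepsOf w) k = w k := by
  induction k using Fin.induction with
  | zero => simp [h0]
  | succ k ih =>
    rw [Fin.val_castSucc] at ih
    rw [Fin.val_succ, prefixHeight_succ _ (by simp), ih, getElem_stepsOf]
    have := Int.natAbs_eq_iff.mp (hstep k)
    by_cases hlt : w k.castSucc < w k.succ <;> simp [hlt] <;> omega

lemma stepsOf_eq_of_prefixHeight {w : Fin (n + 1) → ℕ} {l : List DyckStep}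
    (hl : l.length = n) (hw : ∀ k : Fin (n + 1), (w k : ℤ) = prefixHeight l k) :
    stepsOf w = l := by
  refine List.ext_getElem (by simp [hl]) fun i hi hil => ?_
  obtain ⟨k, rfl⟩ : ∃ k : Fin n, (k : ℕ) = i := ⟨⟨i, by simpa using hi⟩, rfl⟩
  have hk : (w k.succ : ℤ) = w k.castSucc + if l[(k : ℕ)] = U then 1 else -1 := by
    rw [hw, hw, Fin.val_succ, Fin.val_castSucc, prefixHeight_succ l hil]
  rw [getElem_stepsOf]
  rcases l[(k : ℕ)].dichotomy with h | h <;> simp [h] at hk ⊢ <;> omega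

abbrev Excursion (n : ℕ) : Type :=
  {w : Fin (n + 1) → ℕ // w 0 = 0 ∧ w (Fin.last n) = 0 ∧
    ∀ k : Fin n, ((w k.succ : ℤ) - (w k.castSucc : ℤ)).natAbs = 1}

def Excursion.toDyckWord (w : Excursion n) : DyckWord :=
  .ofPrefixHeight (stepsOf w.1)
    (fun i => by
      rcases le_total i n with hi | hi
      · rw [prefixHeight_stepsOf w.2.1 w.2.2.2 ⟨i, Nat.lt_succ_of_le hi⟩]
        positivity
      · rw [prefixHeight_of_length_le _ (by simpa using hi), length_stepsOf,
          prefixHeight_stepsOf w.2.1 w.2.2.2 ⟨n, n.lt_succ_self⟩]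
        positivity)
    (by simpa [w.2.2.1] using prefixHeight_stepsOf w.2.1 w.2.2.2 (Fin.last n))

def DyckWord.toExcursion (p : DyckWord) (hp : p.toList.length = n) : Excursion n :=
  ⟨fun k => (prefixHeight p.toList k).toNat, by
    refine ⟨by simp, by simp [← hp, p.prefixHeight_length], fun k => ?_⟩
    rw [Int.toNat_of_nonneg (p.prefixHeight_nonneg _),
      Int.toNat_of_nonneg (p.prefixHeight_nonneg _), Fin.val_succ,
      prefixHeight_succ _ (hp ▸ k.2)]
    split_ifs <;> simp⟩

lemma DyckWord.coe_toExcursion_apply (p : DyckWord) (hp : p.toList.length = n)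
    (k : Fin (n + 1)) : ((p.toExcursion hp).1 k : ℤ) = prefixHeight p.toList k :=
  Int.toNat_of_nonneg (p.prefixHeight_nonneg _)

def excursionEquivDyckWord (n : ℕ) :
    Excursion n ≃ {p : DyckWord // p.toList.length = n} where
  toFun w := ⟨w.toDyckWord, length_stepsOf w.1⟩
  invFun p := p.1.toExcursion p.2
  left_inv w := by
    ext k
    simp [DyckWord.toExcursion, Excursion.toDyckWord, DyckWord.ofPrefixHeight,
      prefixHeight_stepsOf w.2.1 w.2.2.2]
  right_inv p := Subtype.ext <| DyckWord.ext <|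
    stepsOf_eq_of_prefixHeight p.2 (p.1.coe_toExcursion_apply p.2)

end Excursion

lemma walkCount_zero_eq_card (n : ℕ) :
    walkCount 0 n = Nat.card {p : DyckWord // p.toList.length = n} :=
  Nat.card_congr (excursionEquivDyckWord n)

lemma walkCount_zero_two_mul (m : ℕ) : walkCount 0 (2 * m) = catalan m := by
  rw [walkCount_zero_eq_card, ← DyckWord.card_dyckWord_semilength_eq_catalan,
    ← Nat.card_eq_fintype_card]
  exact Nat.card_congr <| Equiv.subtypeEquivRight fun p => by
    rw [← p.two_mul_semilength_eq_length]
    omega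

lemma walkCount_zero_of_odd {n : ℕ} (hn : Odd n) : walkCount 0 n = 0 := by
  rw [walkCount_zero_eq_card, Nat.card_eq_zero]
  refine .inl ⟨fun ⟨p, hp⟩ => Nat.not_even_iff_odd.mpr hn ?_⟩
  exact ⟨p.semilength, by rw [← hp, ← p.two_mul_semilength_eq_length, two_mul]⟩

lemma succ_succ_mul_catalan_succ (n : ℕ) :
    (n + 2) * catalan (n + 1) = 2 * (2 * n + 1) * catalan n := by
  apply Nat.eq_of_mul_eq_mul_left n.succ_pos
  calc (n + 1) * ((n + 2) * catalan (n + 1))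
      = (n + 1) * (n + 1).centralBinom := by rw [← succ_mul_catalan_eq_centralBinom]
    _ = 2 * (2 * n + 1) * n.centralBinom := Nat.succ_mul_centralBinom_succ n
    _ = (n + 1) * (2 * (2 * n + 1) * catalan n) := by
      rw [← succ_mul_catalan_eq_centralBinom]; ring

lemma walkCount_zero_add_two (n : ℕ) :
    (n + 4) * walkCount 0 (n + 2) = 4 * (n + 1) * walkCount 0 n := by
  rcases n.even_or_odd' with ⟨m, rfl | rfl⟩
  · rw [show 2 * m + 2 = 2 * (m + 1) by ring, walkCount_zero_two_mul, walkCount_zero_two_mul]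
    linear_combination 2 * succ_succ_mul_catalan_succ m
  · rw [walkCount_zero_of_odd (by simp [parity_simps]), walkCount_zero_of_odd (by simp),
      mul_zero, mul_zero]

section Operator

variable {R : Type*} [CommRing R]

noncomputable def excursionOperator (f : R⟦X⟧) : R⟦X⟧ :=
  X * (1 - 4 * X ^ 2) * derivative R (derivative R f) + (3 - 16 * X ^ 2) * derivative R f -
    8 * X * f

lemma coeff_zero_excursionOperator (f : R⟦X⟧) :
    coeff 0 (excursionOperator f) = 3 * coeff 1 f := by
  simp [excursionOperator, mul_assoc, sub_mul, ← map_ofNat (C (R := R)), coeff_derivative,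
    coeff_zero_X_mul, pow_succ, -coeff_zero_eq_constantCoeff]

lemma coeff_succ_excursionOperator (f : R⟦X⟧) (n : ℕ) :
    coeff (n + 1) (excursionOperator f) =
      (n + 2) * ((n + 4) * coeff (n + 2) f - 4 * (n + 1) * coeff n f) := by
  rcases n with _ | _ | n <;>
    simp [excursionOperator, coeff_derivative, ← map_ofNat (C (R := R)), coeff_succ_X_mul,
      pow_succ, mul_assoc, sub_mul, mul_sub] <;>
    ring

lemma excursionOperator_eq_zero {f : R⟦X⟧} (h1 : coeff 1 f = 0)
    (hrec : ∀ n : ℕ, (n + 4) * coeff (n + 2) f = 4 * (n + 1) * coeff n f) :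
    excursionOperator f = 0 := by
  ext (_ | n)
  · simp [coeff_zero_excursionOperator, h1]
  · simp [coeff_succ_excursionOperator, hrec]

end Operator

theorem excursion_series_ode2 :
    PowerSeries.X * (1 - 4 * PowerSeries.X ^ 2) *
        (PowerSeries.derivative ℚ
          (PowerSeries.derivative ℚ (PowerSeries.mk fun n => (walkCount 0 n : ℚ)))) +
      (3 - 16 * PowerSeries.X ^ 2) *
        (PowerSeries.derivative ℚ (PowerSeries.mk fun n => (walkCount 0 n : ℚ))) -
      8 * PowerSeries.X * (PowerSeries.mk fun n => (walkCount 0 n : ℚ)) = 0 :=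
  excursionOperator_eq_zero (by simp [walkCount_zero_of_odd odd_one]) fun n => by
    simpa using congr(((↑) : ℕ → ℚ) $(walkCount_zero_add_two n))
end
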